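/- Suppose s ≡ t (mod 2n), gcd(s,2n)=1, and there exist σ ∈ Aut(F_{q^{2n}}) and h ∈ F_{q^{2n}}^* with γ^σ h^{q^{ks}−1} = θ, where N_{q^{2n}/q}(γ) and N_{q^{2n}/q}(θ) are non-squares in F_q. Then there exist d, g ∈ F_{q^{2n}}^* such that the map f ↦ (d X) ∘ f^σ ∘ (g X) sends D_{k,s}(γ) onto D_{k,t}(θ); hence D_{k,s}(γ) and D_{k,t}(θ) are equivalent rank-metric codes. -/

import Mathlib

lemma aux_pow_pow_add (q n : ℕ) {K : Type*} [Field K] [Fintype K]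
    (hK : Fintype.card K = q ^ (2 * n)) (x : K) (j r : ℕ) :
    x ^ q ^ (2 * n * j + r) = x ^ q ^ r := by
  induction j with
  | zero => simp
  | succ j ih =>
    have h1 : 2 * n * (j + 1) + r = 2 * n + (2 * n * j + r) := by ring
    have h2 : x ^ q ^ (2 * n) = x := by rw [← hK]; exact FiniteField.pow_card x
    rw [h1, pow_add, pow_mul, h2, ih]

lemma aux_pow_q_congr (q n : ℕ) {K : Type*} [Field K] [Fintype K]
    (hK : Fintype.card K = q ^ (2 * n)) (x : K) {a b : ℕ}
    (hab : a ≡ b [MOD 2 * n]) : x ^ q ^ a = x ^ q ^ b := by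
  have ha := Nat.div_add_mod a (2 * n)
  have hb := Nat.div_add_mod b (2 * n)
  have hm : a % (2 * n) = b % (2 * n) := hab
  calc x ^ q ^ a = x ^ q ^ (2 * n * (a / (2 * n)) + a % (2 * n)) := by rw [ha]
    _ = x ^ q ^ (a % (2 * n)) := aux_pow_pow_add q n hK x _ _
    _ = x ^ q ^ (2 * n * (b / (2 * n)) + b % (2 * n)) := by
        rw [hm]; exact (aux_pow_pow_add q n hK x _ _).symm
    _ = x ^ q ^ b := by rw [hb]


/-- `φ : K → K` is (induced by) a `q`-linearized polynomial modulo `X^{q^n} - X`. -/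
def IsLinPoly (q n : ℕ) {K : Type*} [Field K] (φ : K → K) : Prop :=
  ∃ a : Fin n → K, φ = fun x => ∑ i : Fin n, a i * x ^ q ^ (i : ℕ)

/-- The code `D_{k,s}(γ)` as a set of `F_q`-linear maps on `F_{q^{2n}}`. -/
def DFun (q s n k : ℕ) {K : Type*} [Field K] (γ : K) : Set (K → K) :=
  {f | ∃ a b : K, a ^ q ^ n = a ∧ b ^ q ^ n = b ∧ ∃ c : ℕ → K,
    f = fun x => a * x + (∑ i ∈ Finset.Ioo 0 k, c i * x ^ q ^ (s * i))
      + γ * b * x ^ q ^ (s * k)}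

/-- Equivalence of rank-metric codes of `q`-linearized maps on `F_{q^{2n}}`. -/
def codeEquiv (q n : ℕ) {K : Type*} [Field K] (C₁ C₂ : Set (K → K)) : Prop :=
  ∃ (φ₁ φ₂ : K → K) (ρ : K ≃+* K),
    IsLinPoly q (2 * n) φ₁ ∧ Function.Bijective φ₁ ∧
    IsLinPoly q (2 * n) φ₂ ∧ Function.Bijective φ₂ ∧
    C₂ = {g | ∃ f ∈ C₁, g = φ₁ ∘ (⇑ρ ∘ f ∘ ⇑ρ.symm) ∘ φ₂}

/-- Sufficiency: if `s ≡ t (mod 2n)` and `γ^σ h^{q^{ks}-1} = θ` for some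
`σ ∈ Aut(F_{q^{2n}})` and `h ≠ 0`, then `f ↦ (dX) ∘ f^σ ∘ (gX)` with appropriate
`d, g ≠ 0` carries `D_{k,s}(γ)` onto `D_{k,t}(θ)`; hence the two codes are
equivalent. -/
theorem D_codes_equivalent_of_norm_condition (q s t n k : ℕ) (hn : 0 < n)
    (hs : Nat.Coprime s (2 * n)) (ht : Nat.Coprime t (2 * n))
    (hst : s ≡ t [MOD 2 * n]) (hk1 : 1 ≤ k) (hk2 : k ≤ 2 * n - 1)
    (K : Type*) [Field K] [Fintype K] (hK : Fintype.card K = q ^ (2 * n))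
    (γ θ : K)
    (hγ : ¬ ∃ z : K, z ^ q = z ∧ z ^ 2 = γ ^ (∑ i ∈ Finset.range (2 * n), q ^ i))
    (hθ : ¬ ∃ z : K, z ^ q = z ∧ z ^ 2 = θ ^ (∑ i ∈ Finset.range (2 * n), q ^ i))
    (σ : K ≃+* K) (h : K) (hh : h ≠ 0)
    (hcond : σ γ * h ^ (q ^ (k * s) - 1) = θ) :
    (∃ d g : K, d ≠ 0 ∧ g ≠ 0 ∧
      {f' : K → K | ∃ f ∈ DFun q s n k γ,
        f' = fun x => d * σ (f (σ.symm (g * x)))} = DFun q t n k θ) ∧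
    codeEquiv q n (DFun q s n k γ) (DFun q t n k θ) := by
  have h2n : 0 < 2 * n := by omega
  have hq : 0 < q := by
    rcases Nat.eq_zero_or_pos q with h0 | h1
    · exfalso
      have := Fintype.card_pos (α := K)
      rw [hK, h0, zero_pow (by omega)] at this
      omega
    · exact h1
  have hE1 : (1 : ℕ) ≤ q ^ (s * k) := Nat.one_le_pow _ _ hq
  have hθ' : h⁻¹ * σ γ * h ^ q ^ (s * k) = θ := by
    have hps : h ^ q ^ (s * k) = h ^ (q ^ (s * k) - 1) * h := by
      rw [← pow_succ]
      congr 1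
      omega
    rw [hps, mul_comm s k, ← hcond]
    field_simp
  -- the key transformation identity
  have trans_eq : ∀ a b : K, ∀ c : ℕ → K,
      (fun x => h⁻¹ * σ (a * (σ.symm (h * x))
        + (∑ i ∈ Finset.Ioo 0 k, c i * (σ.symm (h * x)) ^ q ^ (s * i))
        + γ * b * (σ.symm (h * x)) ^ q ^ (s * k)))
      = fun x => σ a * x
        + (∑ i ∈ Finset.Ioo 0 k, (h⁻¹ * σ (c i) * h ^ q ^ (s * i)) * x ^ q ^ (t * i))
        + θ * σ b * x ^ q ^ (t * k) := by
    intro a b c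
    funext x
    have hxi : ∀ i : ℕ, x ^ q ^ (s * i) = x ^ q ^ (t * i) := fun i =>
      aux_pow_q_congr q n hK x (hst.mul_right i)
    simp only [map_add, map_sum, map_mul, map_pow, RingEquiv.apply_symm_apply, mul_pow,
      mul_add, Finset.mul_sum]
    congr 1
    · congr 1
      · field_simp
      · refine Finset.sum_congr rfl fun i _ => ?_
        rw [← hxi i]
        ring
    · rw [← hxi k, ← hθ']
      ring
  have hmain : {f' : K → K | ∃ f ∈ DFun q s n k γ,
      f' = fun x => h⁻¹ * σ (f (σ.symm (h * x)))} = DFun q t n k θ := by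
    ext f'
    constructor
    · rintro ⟨f, ⟨a, b, ha, hb, c, rfl⟩, rfl⟩
      refine ⟨σ a, σ b, ?_, ?_, fun i => h⁻¹ * σ (c i) * h ^ q ^ (s * i), ?_⟩
      · rw [← map_pow, ha]
      · rw [← map_pow, hb]
      · exact trans_eq a b c
    · rintro ⟨a', b', ha', hb', c', rfl⟩
      refine ⟨fun x => σ.symm a' * x
          + (∑ i ∈ Finset.Ioo 0 k, σ.symm (h * c' i / h ^ q ^ (s * i)) * x ^ q ^ (s * i))
          + γ * σ.symm b' * x ^ q ^ (s * k),
        ⟨σ.symm a', σ.symm b', ?_, ?_, fun i => σ.symm (h * c' i / h ^ q ^ (s * i)), rfl⟩, ?_⟩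
      · rw [← map_pow, ha']
      · rw [← map_pow, hb']
      · refine Eq.trans ?_ (trans_eq (σ.symm a') (σ.symm b')
          (fun i => σ.symm (h * c' i / h ^ q ^ (s * i)))).symm
        funext x
        have hc : ∀ i : ℕ,
            h⁻¹ * (h * c' i / h ^ q ^ (s * i)) * h ^ q ^ (s * i) = c' i := by
          intro i
          have hEi : (h : K) ^ q ^ (s * i) ≠ 0 := pow_ne_zero _ hh
          field_simp
        simp only [RingEquiv.apply_symm_apply, hc]
  constructor
  · exact ⟨h⁻¹, h, inv_ne_zero hh, hh, hmain⟩
  · have lin : ∀ c : K, IsLinPoly q (2 * n) (fun x => c * x) := by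
      intro c
      refine ⟨fun i => if i = ⟨0, h2n⟩ then c else 0, ?_⟩
      funext x
      symm
      rw [Finset.sum_eq_single (⟨0, h2n⟩ : Fin (2 * n))]
      · simp
      · intro i _ hi; simp [hi]
      · simp
    refine ⟨fun x => h⁻¹ * x, fun x => h * x, σ, lin h⁻¹,
      (Equiv.mulLeft₀ h⁻¹ (inv_ne_zero hh)).bijective, lin h,
      (Equiv.mulLeft₀ h hh).bijective, ?_⟩
    rw [← hmain]
    rfl
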